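/- arXiv:0807.2824 — 7 statements merged into one kernel-verified Lean document; each statement's English description precedes it below -/
import Mathlib

section
/- Let I be a finite type and A : I → I → ℤ a symmetric matrix with A i i = 2 for all i, A i j ∈ {0, −1} for all i ≠ j, and such that A is positive definite as a real matrix (for every nonzero y : I → ℝ one has ∑_{i,i'} y i · y i' · A i i' > 0). Let π : I → J be a surjective map onto a finite type J such that A i j = 0 whenever i ≠ j and π i = π j. Define B : J → J → ℤ by B η η = 2 · #(π⁻¹{η}) and, for η ≠ η', B η η' = −#{(i,j) ∈ π⁻¹{η} × π⁻¹{η'} : A i j ≠ 0}. Then B is positive definite: for every x : J → ℝ that is not identically zero, ∑_{η,η'} x η · x η' · B η η' > 0. -/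
/-!
Pull `x : J → ℝ` back to `y = x ∘ π`, which is nonzero since `π` is surjective. Expanding the
quadratic form of `A` at `y` fiber by fiber expresses it as the quadratic form at `x` of the
matrix of fiber sums `∑_{π i = η, π j = η'} A i j`, and that matrix is exactly `B`: on a
diagonal block only the diagonal entries `2` survive (`A` vanishes inside a fiber), and an
off-diagonal block has entries in `{0, -1}`, so it sums to minus its number of nonzero entries.
-/

open Finset

section

variable {I J R : Type*} [Fintype I] [DecidableEq J]

def fiberSum [AddCommMonoid R] (π : I → J) (A : I → I → R) (η η' : J) : R :=
  ∑ i with π i = η, ∑ j with π j = η', A i j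

theorem sum_sum_mul_fiberSum [Fintype J] [CommSemiring R] (π : I → J) (A : I → I → R)
    (x : J → R) :
    ∑ η, ∑ η', x η * x η' * fiberSum π A η η' = ∑ i, ∑ j, x (π i) * x (π j) * A i j := by
  rw [← sum_fiberwise univ π]
  refine sum_congr rfl fun η _ => ?_
  simp only [fiberSum, mul_sum]
  rw [sum_comm]
  refine sum_congr rfl fun i hi => ?_
  rw [← sum_fiberwise univ π]
  refine sum_congr rfl fun η' _ => sum_congr rfl fun j hj => ?_
  rw [(mem_filter.1 hi).2, (mem_filter.1 hj).2]

theorem Finset.sum_eq_neg_card_filter_ne_zero {α : Type*} [Ring R] (s : Finset α) (f : α → R)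
    [DecidablePred fun a => f a ≠ 0] (hf : ∀ a ∈ s, f a = 0 ∨ f a = -1) :
    ∑ a ∈ s, f a = -#{a ∈ s | f a ≠ 0} := by
  rw [← sum_filter_ne_zero, sum_congr rfl fun a ha => ?_, sum_const, smul_neg, nsmul_one]
  · rw [mem_filter] at ha
    exact (hf a ha.1).resolve_left ha.2

theorem fiberSum_self [DecidableEq I] (π : I → J) (A : I → I → ℤ) (hdiag : ∀ i, A i i = 2)
    (hfib : ∀ i j, i ≠ j → π i = π j → A i j = 0) (η : J) :
    fiberSum π A η η = 2 * #{i | π i = η} := by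
  have hrow : ∀ i ∈ ({i | π i = η} : Finset I), ∑ j with π j = η, A i j = 2 := by
    intro i hi
    rw [sum_eq_single_of_mem i hi, hdiag]
    intro j hj hji
    exact hfib i j (Ne.symm hji) ((mem_filter.1 hi).2.trans (mem_filter.1 hj).2.symm)
  rw [fiberSum, sum_congr rfl hrow, sum_const, nsmul_eq_mul, mul_comm]

theorem fiberSum_of_ne (π : I → J) (A : I → I → ℤ)
    (hoff : ∀ i j, i ≠ j → A i j = 0 ∨ A i j = -1) {η η' : J} (h : η ≠ η') :
    fiberSum π A η η' = -#{p : I × I | π p.1 = η ∧ π p.2 = η' ∧ A p.1 p.2 ≠ 0} := by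
  rw [fiberSum, ← sum_product', sum_eq_neg_card_filter_ne_zero _ (fun p : I × I => A p.1 p.2)]
  · congr 3
    ext p
    simp [and_assoc]
  · rintro ⟨i, j⟩ hp
    simp only [mem_product, mem_filter, mem_univ, true_and] at hp
    exact hoff i j fun hij => h (hp.1.symm.trans (hij ▸ hp.2))
end

theorem folded_pairing_posDef_general {I J : Type*} [Fintype I] [Fintype J]
    [DecidableEq I] [DecidableEq J]
    (A : I → I → ℤ)
    (hdiag : ∀ i, A i i = 2)
    (hoff : ∀ i j, i ≠ j → A i j = 0 ∨ A i j = -1)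
    (hpos : ∀ y : I → ℝ, y ≠ 0 → 0 < ∑ i, ∑ i', y i * y i' * (A i i' : ℝ))
    (π : I → J) (hπ : Function.Surjective π)
    (hfib : ∀ i j, i ≠ j → π i = π j → A i j = 0)
    (B : J → J → ℤ)
    (hBdiag : ∀ η, B η η = 2 * (Finset.univ.filter (fun i => π i = η)).card)
    (hBoff : ∀ η η', η ≠ η' →
      B η η' = -((Finset.univ.filter
        (fun p : I × I => π p.1 = η ∧ π p.2 = η' ∧ A p.1 p.2 ≠ 0)).card)) :
    ∀ x : J → ℝ, x ≠ 0 → 0 < ∑ η, ∑ η', x η * x η' * (B η η' : ℝ) := by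
  intro x hx
  have hB : ∀ η η', (B η η' : ℝ) = fiberSum π (fun i j => (A i j : ℝ)) η η' := by
    intro η η'
    have hBA : B η η' = fiberSum π A η η' := by
      rcases eq_or_ne η η' with rfl | h
      · rw [hBdiag, fiberSum_self π A hdiag hfib]
      · rw [hBoff η η' h, fiberSum_of_ne π A hoff h]
    simp [hBA, fiberSum]
  have hy : x ∘ π ≠ 0 := fun h => hx (hπ.injective_comp_right (h.trans rfl))
  simp only [hB, sum_sum_mul_fiberSum]
  exact hpos _ hy

/-- Positive definiteness of the folded pairing (Lusztig 1.5, δ = 1 case).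
`I` is a finite type, `A` a symmetric integer matrix with diagonal `2`, off-diagonal
entries in `{0, -1}`, positive definite over `ℝ`.  `π : I → J` is surjective and `A`
vanishes on distinct elements of a common fiber.  The folded matrix `B` on `J` is
defined by `B η η = 2 * |π⁻¹ η|` and `B η η' = -|{(i,j) ∈ π⁻¹ η × π⁻¹ η' : A i j ≠ 0}|`
for `η ≠ η'`.  Then `B` is positive definite over `ℝ`. -/
theorem folded_pairing_posDef {I J : Type*} [Fintype I] [Fintype J]
    [DecidableEq I] [DecidableEq J]
    (A : I → I → ℤ)
    (hsymm : ∀ i j, A i j = A j i)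
    (hdiag : ∀ i, A i i = 2)
    (hoff : ∀ i j, i ≠ j → A i j = 0 ∨ A i j = -1)
    (hpos : ∀ y : I → ℝ, y ≠ 0 → 0 < ∑ i, ∑ i', y i * y i' * (A i i' : ℝ))
    (π : I → J) (hπ : Function.Surjective π)
    (hfib : ∀ i j, i ≠ j → π i = π j → A i j = 0)
    (B : J → J → ℤ)
    (hBdiag : ∀ η, B η η = 2 * (Finset.univ.filter (fun i => π i = η)).card)
    (hBoff : ∀ η η', η ≠ η' →
      B η η' = -((Finset.univ.filter
        (fun p : I × I => π p.1 = η ∧ π p.2 = η' ∧ A p.1 p.2 ≠ 0)).card)) :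
    ∀ x : J → ℝ, x ≠ 0 → 0 < ∑ η, ∑ η', x η * x η' * (B η η' : ℝ) :=
  folded_pairing_posDef_general A hdiag hoff hpos π hπ hfib B hBdiag hBoff
end

section
/- Fix n ≥ 1. Let I = {1,…,2n}, let A i j = 2 if i = j, A i j = −1 if |i−j| = 1, and A i j = 0 otherwise, and let σ i = 2n+1−i. For k ∈ {1,…,n} let η_k = {k, 2n+1−k} (these are the orbits of σ on I), let δ_k = 2 if there exist i ≠ j in η_k with A i j ≠ 0 and δ_k = 1 otherwise, and let δ = max_k δ_k. Then: δ_n = 2, δ_k = 1 for k < n, and δ = 2; moreover the rational numbers B k k = 2 δ⁻¹ δ_k |η_k| and, for k ≠ l, B k l = −δ⁻¹ δ_k δ_l · #{(i,j) ∈ η_k × η_l : A i j ≠ 0} satisfy: B k k = 2 for k < n, B n n = 4, B k (k+1) = B (k+1) k = −1 for k ≤ n−2, B (n−1) n = B n (n−1) = −2 (when n ≥ 2), and B k l = 0 whenever |k−l| ≥ 2. -/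
/-!
Folding identifies `k` with `2n+1-k`. The two halves `{1,…,n}` and `{n+1,…,2n}` of the Dynkin
path are joined only by the edge `n — n+1`, so `η n` is the only orbit containing an edge: it
gets weight `δ n = 2` and all other orbits weight `1`, whence `δ = 2`. Every orbit has two
elements, and two distinct orbits `η k`, `η l` are joined by the two edges `k — l` and
`2n+1-k — 2n+1-l` when `|k-l| = 1` and by none otherwise. Substituting into Lusztig's formulas
gives the entries of the folded matrix.
-/

namespace FoldingA2n

def cartanA (i j : ℕ) : ℤ :=
  if i = j then 2 else if i + 1 = j ∨ j + 1 = i then -1 else 0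

theorem cartanA_ne_zero_iff {i j : ℕ} :
    cartanA i j ≠ 0 ↔ i = j ∨ i + 1 = j ∨ j + 1 = i := by
  unfold cartanA
  split_ifs <;> simp_all

def orbit (n k : ℕ) : Finset ℕ := {k, 2 * n + 1 - k}

/-- `k = 2n+1-k` is impossible by parity, also when the truncated subtraction gives `0`. -/
theorem card_orbit (n k : ℕ) : (orbit n k).card = 2 :=
  Finset.card_pair (by omega)

theorem exists_adjacent_mem_orbit_iff {n k : ℕ} (hk : k ≤ n) :
    (∃ i ∈ orbit n k, ∃ j ∈ orbit n k, i ≠ j ∧ cartanA i j ≠ 0) ↔ k = n := by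
  simp only [orbit, Finset.mem_insert, Finset.mem_singleton, cartanA_ne_zero_iff]
  constructor
  · rintro ⟨i, hi, j, hj, hij, hadj⟩
    omega
  · rintro rfl
    exact ⟨k, .inl rfl, k + 1, .inr (by omega), by omega, .inr (.inl rfl)⟩

theorem card_filter_adjacent_orbit_product {n k l : ℕ} (hk : k ≤ n) (hl : l ≤ n)
    (hkl : k ≠ l) :
    ((orbit n k ×ˢ orbit n l).filter (fun p => cartanA p.1 p.2 ≠ 0)).card =
      if k + 1 = l ∨ l + 1 = k then 2 else 0 := by
  split_ifs with hadj
  · have hedges : (orbit n k ×ˢ orbit n l).filter (fun p => cartanA p.1 p.2 ≠ 0) =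
        {(k, l), (2 * n + 1 - k, 2 * n + 1 - l)} := by
      ext ⟨i, j⟩
      simp only [orbit, Finset.mem_filter, Finset.mem_product, Finset.mem_insert,
        Finset.mem_singleton, Prod.mk.injEq, cartanA_ne_zero_iff]
      omega
    rw [hedges, Finset.card_pair (by simp only [ne_eq, Prod.mk.injEq]; omega)]
  · rw [Finset.card_eq_zero, Finset.filter_eq_empty_iff]
    rintro ⟨i, j⟩ hij
    simp only [orbit, Finset.mem_product, Finset.mem_insert, Finset.mem_singleton] at hij
    rw [not_not, ← not_ne_iff, cartanA_ne_zero_iff]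
    omega

/-- The Cartan datum `(I̲, ∘)` of Lusztig 1.4, on the orbit labels `k ≤ n`. -/
def foldedCartan (n k l : ℕ) : ℚ :=
  if k = l then (if k = n then 4 else 2)
  else if k + 1 = l ∨ l + 1 = k then (if k = n ∨ l = n then -2 else -1) else 0

end FoldingA2n

open FoldingA2n

/-- folding type `A_{2n}` along the involution `σ i = 2n+1-i`
(Lusztig 1.2 together with 1.5) yields the Cartan datum of 1.4.  The elements
of `I = {1,…,2n}` are encoded as the natural numbers `1,…,2n`; the orbits are
`η k = {k, 2n+1-k}` for `k ∈ {1,…,n}`. -/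
theorem folding_A2n (n : ℕ) (hn : 1 ≤ n)
    (A : ℕ → ℕ → ℤ)
    (hA : ∀ i j, A i j = if i = j then 2 else if i + 1 = j ∨ j + 1 = i then -1 else 0)
    (σ : ℕ → ℕ) (hσ : ∀ i, σ i = 2 * n + 1 - i)
    (η : ℕ → Finset ℕ) (hη : ∀ k, η k = {k, σ k})
    (δ : ℕ → ℕ)
    (hδ : ∀ k, δ k = if ∃ i ∈ η k, ∃ j ∈ η k, i ≠ j ∧ A i j ≠ 0 then 2 else 1)
    (Δ : ℕ) (hΔ : Δ = (Finset.Icc 1 n).sup δ)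
    (B : ℕ → ℕ → ℚ)
    (hBdiag : ∀ k, B k k = 2 * (Δ : ℚ)⁻¹ * (δ k : ℚ) * ((η k).card : ℚ))
    (hBoff : ∀ k l, k ≠ l → B k l =
      -((Δ : ℚ)⁻¹ * (δ k : ℚ) * (δ l : ℚ) *
        ((((η k) ×ˢ (η l)).filter (fun p => A p.1 p.2 ≠ 0)).card : ℚ))) :
    δ n = 2 ∧
    (∀ k, 1 ≤ k → k < n → δ k = 1) ∧
    Δ = 2 ∧
    (∀ k, 1 ≤ k → k < n → B k k = 2) ∧
    B n n = 4 ∧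
    (∀ k, 1 ≤ k → k + 2 ≤ n → B k (k + 1) = -1 ∧ B (k + 1) k = -1) ∧
    (2 ≤ n → B (n - 1) n = -2 ∧ B n (n - 1) = -2) ∧
    (∀ k l, 1 ≤ k → k ≤ n → 1 ≤ l → l ≤ n → (k + 2 ≤ l ∨ l + 2 ≤ k) → B k l = 0) := by
  obtain rfl : A = cartanA := funext fun i => funext (hA i)
  obtain rfl : η = orbit n := funext fun k => by rw [hη, hσ, orbit]
  have hδ' : ∀ k ≤ n, δ k = if k = n then 2 else 1 := fun k hk => by
    rw [hδ, if_congr (exists_adjacent_mem_orbit_iff hk) rfl rfl]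
  have hΔ' : Δ = 2 := hΔ ▸ le_antisymm
    (Finset.sup_le fun k _ => by rw [hδ k]; split_ifs <;> omega)
    (Finset.le_sup_of_le (Finset.mem_Icc.mpr ⟨hn, le_rfl⟩)
      (by rw [hδ' n le_rfl, if_pos rfl]))
  have hB : ∀ k ≤ n, ∀ l ≤ n, B k l = foldedCartan n k l := by
    intro k hk l hl
    rcases eq_or_ne k l with rfl | hkl
    · rw [hBdiag, hΔ', hδ' k hk, card_orbit, foldedCartan, if_pos rfl]
      split_ifs <;> norm_num
    · rw [hBoff k l hkl, hΔ', hδ' k hk, hδ' l hl, card_filter_adjacent_orbit_product hk hl hkl,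
        foldedCartan, if_neg hkl]
      split_ifs <;> first | omega | norm_num
  refine ⟨?_, fun k _ hk => ?_, hΔ', fun k _ hk => ?_, ?_, fun k _ hk => ⟨?_, ?_⟩,
    fun hn2 => ⟨?_, ?_⟩, fun k l _ hk _ hl hfar => ?_⟩
  all_goals first
    | rw [hδ' _ (by omega)]
    | rw [hB _ (by omega) _ (by omega), foldedCartan]
  all_goals split_ifs <;> first | omega | norm_num
end

section
/- For positive real numbers d, c, b, a, let α = ab + ad + cd and ε = ab² + ad² + cd² + 2abd, and define F : (ℝ_{>0})⁴ → (ℝ_{>0})⁴ by F(d,c,b,a) = (ab²c/ε, ε/α, α²/ε, bcd/α). Let rev(x₁,x₂,x₃,x₄) = (x₄,x₃,x₂,x₁). Then F maps (ℝ_{>0})⁴ into (ℝ_{>0})⁴ and for all positive reals d, c, b, a one has F(rev(F(d,c,b,a))) = (a,b,c,d); equivalently, rev ∘ F is an involution of (ℝ_{>0})⁴. -/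
/-- Lusztig's type B₂ transition map of 1.9(iii):
`F (d, c, b, a) = (ab²c/ε, ε/α, α²/ε, bcd/α)` where `α = ab + ad + cd` and
`ε = ab² + ad² + cd² + 2abd`. -/
noncomputable def lusztigB2F : ℝ × ℝ × ℝ × ℝ → ℝ × ℝ × ℝ × ℝ :=
  fun (d, c, b, a) =>
    (a * b ^ 2 * c / (a * b ^ 2 + a * d ^ 2 + c * d ^ 2 + 2 * a * b * d),
     (a * b ^ 2 + a * d ^ 2 + c * d ^ 2 + 2 * a * b * d) / (a * b + a * d + c * d),
     (a * b + a * d + c * d) ^ 2 / (a * b ^ 2 + a * d ^ 2 + c * d ^ 2 + 2 * a * b * d),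
     b * c * d / (a * b + a * d + c * d))

/-- Reversal of a quadruple. -/
def rev4R : ℝ × ℝ × ℝ × ℝ → ℝ × ℝ × ℝ × ℝ := fun (x₁, x₂, x₃, x₄) => (x₄, x₃, x₂, x₁)

/-!
Write `(d', c', b', a') = F (d, c, b, a)`. The quantities `α, ε` of the reversed point
`(a', b', c', d')` are `bc` and `b²c`: this follows from the two polynomial identities
`α² + ab²c = (a + c) ε` and `α (b + d) = ε + bcd`. Feeding these values into the formula for `F`,
every coordinate of `F (a', b', c', d')` collapses to the corresponding one of `(a, b, c, d)`.
-/

namespace LusztigB2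

def alpha : ℝ × ℝ × ℝ × ℝ → ℝ := fun (d, c, b, a) => a * b + a * d + c * d

def eps : ℝ × ℝ × ℝ × ℝ → ℝ := fun (d, c, b, a) =>
  a * b ^ 2 + a * d ^ 2 + c * d ^ 2 + 2 * a * b * d

theorem lusztigB2F_apply (d c b a : ℝ) :
    lusztigB2F (d, c, b, a) =
      (a * b ^ 2 * c / eps (d, c, b, a), eps (d, c, b, a) / alpha (d, c, b, a),
        alpha (d, c, b, a) ^ 2 / eps (d, c, b, a), b * c * d / alpha (d, c, b, a)) :=
  rfl

theorem alpha_pos {d c b a : ℝ} (hd : 0 < d) (hc : 0 < c) (hb : 0 < b) (ha : 0 < a) :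
    0 < alpha (d, c, b, a) := by
  simp only [alpha]
  positivity

theorem eps_pos {d c b a : ℝ} (hd : 0 < d) (hc : 0 < c) (hb : 0 < b) (ha : 0 < a) :
    0 < eps (d, c, b, a) := by
  simp only [eps]
  positivity

theorem alpha_sq_add (d c b a : ℝ) :
    alpha (d, c, b, a) ^ 2 + a * b ^ 2 * c = (a + c) * eps (d, c, b, a) := by
  simp only [alpha, eps]
  ring

theorem alpha_mul_add (d c b a : ℝ) :
    alpha (d, c, b, a) * (b + d) = eps (d, c, b, a) + b * c * d := by
  simp only [alpha, eps]
  ring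

theorem alpha_rev_lusztigB2F {d c b a : ℝ} (hα : alpha (d, c, b, a) ≠ 0)
    (hε : eps (d, c, b, a) ≠ 0) : alpha (rev4R (lusztigB2F (d, c, b, a))) = b * c := by
  have hα_def : alpha (d, c, b, a) = a * b + a * d + c * d := rfl
  have key := alpha_sq_add d c b a
  rw [lusztigB2F_apply]
  generalize alpha (d, c, b, a) = α at *
  generalize eps (d, c, b, a) = ε at *
  simp only [rev4R, alpha]
  field_simp
  linear_combination b * c * d * key - b * c * ε * hα_def

theorem eps_rev_lusztigB2F {d c b a : ℝ} (hα : alpha (d, c, b, a) ≠ 0)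
    (hε : eps (d, c, b, a) ≠ 0) : eps (rev4R (lusztigB2F (d, c, b, a))) = b ^ 2 * c := by
  have hε_def : eps (d, c, b, a) = a * b ^ 2 + a * d ^ 2 + c * d ^ 2 + 2 * a * b * d := rfl
  have key := alpha_mul_add d c b a
  rw [lusztigB2F_apply]
  generalize alpha (d, c, b, a) = α at *
  generalize eps (d, c, b, a) = ε at *
  simp only [rev4R, eps]
  field_simp
  linear_combination b ^ 2 * c * (-a * (ε + b * c * d + α * (b + d)) * key - α ^ 2 * hε_def)

theorem lusztigB2F_rev_lusztigB2F {d c b a : ℝ} (hc : c ≠ 0) (hb : b ≠ 0)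
    (hα : alpha (d, c, b, a) ≠ 0) (hε : eps (d, c, b, a) ≠ 0) :
    lusztigB2F (rev4R (lusztigB2F (d, c, b, a))) = (a, b, c, d) := by
  have hα_rev := alpha_rev_lusztigB2F hα hε
  have hε_rev := eps_rev_lusztigB2F hα hε
  rw [lusztigB2F_apply] at hα_rev hε_rev ⊢
  simp only [rev4R] at hα_rev hε_rev ⊢
  rw [lusztigB2F_apply, hα_rev, hε_rev]
  generalize alpha (d, c, b, a) = α at *
  generalize eps (d, c, b, a) = ε at *
  simp only [Prod.mk.injEq]
  refine ⟨?_, ?_, ?_, ?_⟩ <;> field_simp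

theorem lusztigB2F_pos {d c b a : ℝ} (hd : 0 < d) (hc : 0 < c) (hb : 0 < b) (ha : 0 < a) :
    0 < (lusztigB2F (d, c, b, a)).1 ∧ 0 < (lusztigB2F (d, c, b, a)).2.1 ∧
      0 < (lusztigB2F (d, c, b, a)).2.2.1 ∧ 0 < (lusztigB2F (d, c, b, a)).2.2.2 := by
  have hα := alpha_pos hd hc hb ha
  have hε := eps_pos hd hc hb ha
  rw [lusztigB2F_apply]
  exact ⟨by positivity, by positivity, by positivity, by positivity⟩

end LusztigB2

/-- `F` maps `(ℝ_{>0})⁴` into itself and `rev ∘ F` is an involution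
of `(ℝ_{>0})⁴`, i.e. `F (rev (F (d,c,b,a))) = (a,b,c,d)` for positive `d,c,b,a`. -/
theorem lusztigB2F_involution (d c b a : ℝ)
    (hd : 0 < d) (hc : 0 < c) (hb : 0 < b) (ha : 0 < a) :
    (0 < (lusztigB2F (d, c, b, a)).1 ∧
     0 < (lusztigB2F (d, c, b, a)).2.1 ∧
     0 < (lusztigB2F (d, c, b, a)).2.2.1 ∧
     0 < (lusztigB2F (d, c, b, a)).2.2.2) ∧
    lusztigB2F (rev4R (lusztigB2F (d, c, b, a))) = (a, b, c, d) :=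
  ⟨LusztigB2.lusztigB2F_pos hd hc hb ha,
    LusztigB2.lusztigB2F_rev_lusztigB2F hc.ne' hb.ne' (LusztigB2.alpha_pos hd hc hb ha).ne'
      (LusztigB2.eps_pos hd hc hb ha).ne'⟩
end

section
/- Define T : ℤ⁴ → ℤ⁴ by T(d,c,b,a) = (d',c',b',a') where d' = a+2b+c − min(a+2b, a+2d, c+2d), c' = min(a+2b, a+2d, c+2d) − min(a+b, a+d, c+d), b' = 2·min(a+b, a+d, c+d) − min(a+2b, a+2d, c+2d), and a' = b+c+d − min(a+b, a+d, c+d). Let rev(x₁,x₂,x₃,x₄) = (x₄,x₃,x₂,x₁). Then for all integers d, c, b, a one has T(rev(T(d,c,b,a))) = (a,b,c,d); equivalently, rev ∘ T is an involution of ℤ⁴. -/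
/-!
As for Lusztig's rational map, the point is that the two "denominators"
`α = ab + ad + cd` and `ε = ab² + ad² + cd² + 2abd`, evaluated at `rev (T (d, c, b, a))`,
collapse to the monomials `bc` and `b²c`. Tropically these are the min-plus identities
`tropicalB2Alpha (rev (T x)) = b + c` and `tropicalB2Epsilon (rev (T x)) = 2b + c`; once they
are known, every coordinate of `T (rev (T x))` is a linear expression that simplifies to the
corresponding coordinate of `rev x`.
-/

/-- The tropical form of Lusztig's type B₂ transition map, over the semifield
`(ℤ, min, +)`:  `T (d, c, b, a) = (d', c', b', a')` with
`d' = a + 2b + c - min(a+2b, a+2d, c+2d)`,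
`c' = min(a+2b, a+2d, c+2d) - min(a+b, a+d, c+d)`,
`b' = 2 min(a+b, a+d, c+d) - min(a+2b, a+2d, c+2d)`,
`a' = b + c + d - min(a+b, a+d, c+d)`. -/
def tropicalB2T : ℤ × ℤ × ℤ × ℤ → ℤ × ℤ × ℤ × ℤ :=
  fun (d, c, b, a) =>
    (a + 2 * b + c - min (a + 2 * b) (min (a + 2 * d) (c + 2 * d)),
     min (a + 2 * b) (min (a + 2 * d) (c + 2 * d)) - min (a + b) (min (a + d) (c + d)),
     2 * min (a + b) (min (a + d) (c + d)) - min (a + 2 * b) (min (a + 2 * d) (c + 2 * d)),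
     b + c + d - min (a + b) (min (a + d) (c + d)))

def rev4Z : ℤ × ℤ × ℤ × ℤ → ℤ × ℤ × ℤ × ℤ := fun (x₁, x₂, x₃, x₄) => (x₄, x₃, x₂, x₁)

def tropicalB2Alpha : ℤ × ℤ × ℤ × ℤ → ℤ :=
  fun (d, c, b, a) => min (a + b) (min (a + d) (c + d))

/-- The term `2abd` of `ε` is dropped: tropically `a + b + d ≥ min (a + 2b) (a + 2d)`. -/
def tropicalB2Epsilon : ℤ × ℤ × ℤ × ℤ → ℤ :=
  fun (d, c, b, a) => min (a + 2 * b) (min (a + 2 * d) (c + 2 * d))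

theorem tropicalB2T_apply (d c b a : ℤ) :
    tropicalB2T (d, c, b, a) =
      (a + 2 * b + c - tropicalB2Epsilon (d, c, b, a),
       tropicalB2Epsilon (d, c, b, a) - tropicalB2Alpha (d, c, b, a),
       2 * tropicalB2Alpha (d, c, b, a) - tropicalB2Epsilon (d, c, b, a),
       b + c + d - tropicalB2Alpha (d, c, b, a)) :=
  rfl

/-- Tropicalization of `α (rev (T x)) = bc · (abε + ab²cd + α²d) / (αε)` together with
`abε + ab²cd + α²d = αε`. -/
theorem tropicalB2Alpha_rev_tropicalB2T (d c b a : ℤ) :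
    tropicalB2Alpha (rev4Z (tropicalB2T (d, c, b, a))) = b + c := by
  simp only [tropicalB2T, rev4Z, tropicalB2Alpha]
  omega

/-- Tropicalization of `ε (rev (T x)) = b²c · (a (ε + bcd)² + cd²α²) / (εα²)` together with
`ε + bcd = α (b + d)` and `a (b + d)² + cd² = ε`. -/
theorem tropicalB2Epsilon_rev_tropicalB2T (d c b a : ℤ) :
    tropicalB2Epsilon (rev4Z (tropicalB2T (d, c, b, a))) = 2 * b + c := by
  simp only [tropicalB2T, rev4Z, tropicalB2Epsilon]
  omega

/-- `rev ∘ T` is an involution of `ℤ⁴`: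
`T (rev (T (d,c,b,a))) = (a,b,c,d)` for all integers `d,c,b,a`. -/
theorem tropicalB2T_involution (d c b a : ℤ) :
    tropicalB2T (rev4Z (tropicalB2T (d, c, b, a))) = (a, b, c, d) := by
  have hα := tropicalB2Alpha_rev_tropicalB2T d c b a
  have hε := tropicalB2Epsilon_rev_tropicalB2T d c b a
  rw [tropicalB2T_apply] at hα hε ⊢
  simp only [rev4Z, tropicalB2T_apply, Prod.mk.injEq] at hα hε ⊢
  rw [hα, hε]
  refine ⟨?_, ?_, ?_, ?_⟩ <;> ring
end

section
/- Let I₃ = {1, 2, 2̄} with symmetric pairing A given by A i i = 2, A 1 2 = A 2 1 = A 1 2̄ = A 2̄ 1 = −1, and A 2 2̄ = A 2̄ 2 = 0 (type A₃, a path 2 — 1 — 2̄). Then for all positive reals a, b, c, d, setting α = ab + ad + cd and ε = ab² + ad² + cd² + 2abd, the decorated words [(2,d), (2̄,d), (1,c), (2̄,b), (2,b), (1,a)] and [(1, ab²c/ε), (2, ε/α), (2̄, ε/α), (1, α²/ε), (2̄, bcd/α), (2, bcd/α)] are connected by elementary moves. -/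
/-- An elementary move between decorated words (lists of pairs of a letter and a
real coefficient) over a type `I` with pairing `A`: a commutation move when
`A p p' = 0`, or a braid move when `A p p' = -1`. -/
inductive DecoratedMove {I : Type*} (A : I → I → ℤ) :
    List (I × ℝ) → List (I × ℝ) → Prop
  | comm (L₁ L₂ : List (I × ℝ)) (p p' : I) (x y : ℝ) (h : A p p' = 0) :
      DecoratedMove A (L₁ ++ (p, x) :: (p', y) :: L₂) (L₁ ++ (p', y) :: (p, x) :: L₂)
  | braid (L₁ L₂ : List (I × ℝ)) (p p' : I) (x y z : ℝ) (h : A p p' = -1) :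
      DecoratedMove A (L₁ ++ (p, x) :: (p', y) :: (p, z) :: L₂)
        (L₁ ++ (p', y * z / (x + z)) :: (p, x + z) :: (p', x * y / (x + z)) :: L₂)

/-- Two decorated words are connected if one is obtained from the other by a
finite sequence of elementary moves and their inverses. -/
def DecoratedConnected {I : Type*} (A : I → I → ℤ) :
    List (I × ℝ) → List (I × ℝ) → Prop :=
  Relation.EqvGen (DecoratedMove A)

/-- The index set `I₃ = {1, 2, 2̄}` of type A₃ (a path 2 — 1 — 2̄). -/
inductive I3 : Type
  | one : I3
  | two : I3
  | twobar : I3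

/-- The type A₃ pairing on `I₃`. -/
def pairingA3 : I3 → I3 → ℤ
  | .one, .one => 2
  | .two, .two => 2
  | .twobar, .twobar => 2
  | .one, .two => -1
  | .two, .one => -1
  | .one, .twobar => -1
  | .twobar, .one => -1
  | .two, .twobar => 0
  | .twobar, .two => 0

/-!
Five elementary moves suffice: a braid move in `2̄ 1 2̄`, a braid move in `1 2 1`, a commutation
of `2̄` past `2`, a braid move in `2 1 2` and a braid move in `1 2̄ 1`. Only two polynomial
identities are needed to bring the coefficients into the stated form:
`ε = d α + a b (b + d)` and `ε + b c d = α (b + d)`.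
-/

namespace DecoratedConnected

variable {I : Type*} {A : I → I → ℤ}

theorem trans {L M N : List (I × ℝ)} (hLM : DecoratedConnected A L M)
    (hMN : DecoratedConnected A M N) : DecoratedConnected A L N :=
  Relation.EqvGen.trans _ _ _ hLM hMN

theorem comm {p p' : I} (h : A p p' = 0) (L₁ L₂ : List (I × ℝ)) (x y : ℝ) :
    DecoratedConnected A (L₁ ++ (p, x) :: (p', y) :: L₂) (L₁ ++ (p', y) :: (p, x) :: L₂) :=
  .rel _ _ (.comm L₁ L₂ p p' x y h)

theorem braid {p p' : I} (h : A p p' = -1) (L₁ L₂ : List (I × ℝ)) {x y z y' s z' : ℝ}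
    (hy' : y * z / (x + z) = y') (hs : x + z = s) (hz' : x * y / (x + z) = z') :
    DecoratedConnected A (L₁ ++ (p, x) :: (p', y) :: (p, z) :: L₂)
      (L₁ ++ (p', y') :: (p, s) :: (p', z') :: L₂) := by
  subst hy' hz' hs
  exact .rel _ _ (.braid L₁ L₂ p p' x y z h)

theorem a3_folding_chain {i j j' : I} (hj'i : A j' i = -1) (hij : A i j = -1)
    (hj'j : A j' j = 0) (hji : A j i = -1) (hij' : A i j' = -1)
    {a b c d : ℝ} (ha : 0 < a) (hb : 0 < b) (hc : 0 < c) (hd : 0 < d) {α ε : ℝ}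
    (hα : α = a * b + a * d + c * d)
    (hε : ε = a * b ^ 2 + a * d ^ 2 + c * d ^ 2 + 2 * a * b * d) :
    DecoratedConnected A
      [(j, d), (j', d), (i, c), (j', b), (j, b), (i, a)]
      [(i, a * b ^ 2 * c / ε), (j, ε / α), (j', ε / α),
       (i, α ^ 2 / ε), (j', b * c * d / α), (j, b * c * d / α)] := by
  have hbd : 0 < b + d := by positivity
  have hα0 : 0 < α := by rw [hα]; positivity
  have hε0 : 0 < ε := by rw [hε]; positivity
  have hε_eq : ε = d * α + a * b * (b + d) := by rw [hε, hα]; ring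
  have hε_bcd : ε + b * c * d = α * (b + d) := by rw [hε, hα]; ring
  refine (braid hj'i [(j, d)] [(j, b), (i, a)] (y' := b * c / (b + d)) (s := b + d)
    (z' := c * d / (b + d)) ?_ ?_ ?_).trans ?_
  · ring
  · ring
  · ring
  refine (braid hij [(j, d), (i, b * c / (b + d)), (j', b + d)] []
    (y' := a * b * (b + d) / α) (s := α / (b + d)) (z' := b * c * d / α) ?_ ?_ ?_).trans ?_
  · field_simp; rw [hα]; ring
  · field_simp; rw [hα]; ring
  · field_simp; rw [hα]; ring
  refine (comm hj'j [(j, d), (i, b * c / (b + d))] _ (b + d)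
    (a * b * (b + d) / α)).trans ?_
  refine (braid hji [] _ (y' := a * b ^ 2 * c / ε) (s := ε / α)
    (z' := b * c * d * α / ((b + d) * ε)) ?_ ?_ ?_).trans ?_
  · field_simp; linarith
  · field_simp; linarith
  · field_simp; linarith
  refine braid hij' [(i, a * b ^ 2 * c / ε), (j, ε / α)] [(j, b * c * d / α)] ?_ ?_ ?_
  · field_simp; linarith
  · field_simp; linarith
  · field_simp; linarith

end DecoratedConnected

/-- the chain of Lusztig's 1.9(iii): the decorated words
`2^d 2̄^d 1^c 2̄^b 2^b 1^a` and
`1^{ab²c/ε} 2^{ε/α} 2̄^{ε/α} 1^{α²/ε} 2̄^{bcd/α} 2^{bcd/α}` are connected,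
where `α = ab + ad + cd` and `ε = ab² + ad² + cd² + 2abd`. -/
theorem lusztig_1_9_iii_chain (a b c d : ℝ)
    (ha : 0 < a) (hb : 0 < b) (hc : 0 < c) (hd : 0 < d)
    (α ε : ℝ)
    (hα : α = a * b + a * d + c * d)
    (hε : ε = a * b ^ 2 + a * d ^ 2 + c * d ^ 2 + 2 * a * b * d) :
    DecoratedConnected pairingA3
      [(I3.two, d), (I3.twobar, d), (I3.one, c), (I3.twobar, b), (I3.two, b), (I3.one, a)]
      [(I3.one, a * b ^ 2 * c / ε), (I3.two, ε / α), (I3.twobar, ε / α),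
       (I3.one, α ^ 2 / ε), (I3.twobar, b * c * d / α), (I3.two, b * c * d / α)] :=
  DecoratedConnected.a3_folding_chain rfl rfl rfl rfl rfl ha hb hc hd hα hε
end

section
/- Let I₃ = {1, 2, 2̄} with symmetric pairing A given by A i i = 2, A 1 2 = A 2 1 = A 1 2̄ = A 2̄ 1 = −1, and A 2 2̄ = A 2̄ 2 = 0 (type A₃, a path 2 — 1 — 2̄). Then for all integers a, b, c, d, setting α* = min(a+b, a+d, c+d) and ε* = min(a+2b, a+2d, c+2d), the tropically decorated words [(2,d), (2̄,d), (1,c), (2̄,b), (2,b), (1,a)] and [(1, a+2b+c−ε*), (2, ε*−α*), (2̄, ε*−α*), (1, 2α*−ε*), (2̄, b+c+d−α*), (2, b+c+d−α*)] are connected by tropical elementary moves. -/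
/-!
Five tropical moves carry the first word to the second, through the words
`2 2̄ 1 2̄ 2 1 → 2 1 2̄ 1 2 1 → 2 1 2̄ 2 1 2 → 2 1 2 2̄ 1 2 → 1 2 1 2̄ 1 2 → 1 2 2̄ 1 2̄ 2`
(braid, braid, commutation, braid, braid). The coefficients produced are nested minima,
which match the claimed ones because `min d b + min (d + c - min d b) a = α*`.
-/

/-- A tropical elementary move between tropically decorated words (lists of
pairs of a letter and an integer coefficient) over a type `I` with pairing `A`:
a commutation move when `A p p' = 0`, or a tropical braid move when
`A p p' = -1`. -/
inductive TropicalMove {I : Type*} (A : I → I → ℤ) :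
    List (I × ℤ) → List (I × ℤ) → Prop
  | comm (L₁ L₂ : List (I × ℤ)) (p p' : I) (x y : ℤ) (h : A p p' = 0) :
      TropicalMove A (L₁ ++ (p, x) :: (p', y) :: L₂) (L₁ ++ (p', y) :: (p, x) :: L₂)
  | braid (L₁ L₂ : List (I × ℤ)) (p p' : I) (x y z : ℤ) (h : A p p' = -1) :
      TropicalMove A (L₁ ++ (p, x) :: (p', y) :: (p, z) :: L₂)
        (L₁ ++ (p', y + z - min x z) :: (p, min x z) :: (p', x + y - min x z) :: L₂)

/-- Two tropically decorated words are connected if one is obtained from the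
other by a finite sequence of tropical elementary moves and their inverses. -/
def TropicalConnected {I : Type*} (A : I → I → ℤ) :
    List (I × ℤ) → List (I × ℤ) → Prop :=
  Relation.EqvGen (TropicalMove A)

namespace TropicalConnected

variable {I : Type*} {A : I → I → ℤ} {L L' L'' : List (I × ℤ)}

theorem of_eq (h : L = L') : TropicalConnected A L L' :=
  h ▸ Relation.EqvGen.refl L

theorem move_trans (h : TropicalMove A L L') (h' : TropicalConnected A L' L'') :
    TropicalConnected A L L'' :=
  (Relation.EqvGen.rel _ _ h).trans _ _ _ h'

end TropicalConnected

/-- the tropical form of the chain of Lusztig's 1.9(iii), over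
the semifield `(ℤ, min, +)`: with `α* = min(a+b, a+d, c+d)` and
`ε* = min(a+2b, a+2d, c+2d)`, the tropically decorated words
`2^d 2̄^d 1^c 2̄^b 2^b 1^a` and
`1^{a+2b+c-ε*} 2^{ε*-α*} 2̄^{ε*-α*} 1^{2α*-ε*} 2̄^{b+c+d-α*} 2^{b+c+d-α*}`
are connected. -/
theorem lusztig_1_9_iii_tropical_chain (a b c d : ℤ)
    (αs εs : ℤ)
    (hαs : αs = min (a + b) (min (a + d) (c + d)))
    (hεs : εs = min (a + 2 * b) (min (a + 2 * d) (c + 2 * d))) :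
    TropicalConnected pairingA3
      [(I3.two, d), (I3.twobar, d), (I3.one, c), (I3.twobar, b), (I3.two, b), (I3.one, a)]
      [(I3.one, a + 2 * b + c - εs), (I3.two, εs - αs), (I3.twobar, εs - αs),
       (I3.one, 2 * αs - εs), (I3.twobar, b + c + d - αs), (I3.two, b + c + d - αs)] := by
  refine .move_trans (.braid [(I3.two, _)] _ I3.twobar I3.one _ _ _ rfl) ?_
  refine .move_trans
    (.braid [(I3.two, _), (I3.one, _), (I3.twobar, _)] _ I3.one I3.two _ _ _ rfl) ?_
  refine .move_trans (.comm [(I3.two, _), (I3.one, _)] _ I3.twobar I3.two _ _ rfl) ?_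
  refine .move_trans (.braid [] _ I3.two I3.one _ _ _ rfl) ?_
  refine .move_trans (.braid [(I3.one, _), (I3.two, _)] _ I3.one I3.twobar _ _ _ rfl) ?_
  refine .of_eq ?_
  simp only [List.nil_append, List.cons_append, List.cons.injEq, Prod.mk.injEq, true_and, and_true]
  set m₁ := min d b
  set m₂ := min (d + c - m₁) a
  have hα : m₁ + m₂ = αs := by omega
  -- Unfolding gives `min (a+2b, a+2d, c+2d, a+b+d) - αs`; the last term is redundant,
  -- as `2 (a+b+d) = (a+2b) + (a+2d)`.
  have hε : min d (b + a - m₂) = εs - αs := by omega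
  have hαε : min (d + (c + b - m₁) - (εs - αs)) m₂ = 2 * αs - εs := by omega
  rw [hε, hαε]
  omega
end

section
/- Let I be a finite type, A : I → I → ℤ a symmetric matrix, and σ : I ≃ I a bijection with A (σ i) (σ j) = A i j for all i, j. Let η and η' be two orbits of σ acting on I (orbits of the cyclic group generated by σ). Then the number #{j ∈ η' : A i j ≠ 0} is the same for every i ∈ η; consequently the cardinality #η divides #{(i,j) ∈ η × η' : A i j ≠ 0}. -/
/-!
The map `i ↦ #{j ∈ η' : A i j ≠ 0}` is `σ`-invariant, because `σ` preserves both `A` and the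
orbit `η'`; hence it is constant, say `m`, on the orbit `η`. Counting the pairs by their first
coordinate then gives `#η * m` of them.
-/

open Finset

theorem Equiv.Perm.SameCycle.apply_eq_of_invariant {α β : Type*} {f : Equiv.Perm α} {g : α → β}
    (hg : ∀ x, g (f x) = g x) {x y : α} (h : f.SameCycle x y) : g x = g y := by
  obtain ⟨k, rfl⟩ := h
  induction k using Int.induction_on with
  | zero => rfl
  | succ n ih => rw [add_comm, zpow_one_add, Equiv.Perm.mul_apply, hg, ih]
  | pred n ih =>
    rw [sub_eq_neg_add, zpow_add, zpow_neg_one, Equiv.Perm.mul_apply, ← hg (f⁻¹ _),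
      Equiv.Perm.coe_inv, Equiv.apply_symm_apply, ih]

theorem card_filter_perm_apply {α : Type*} {σ : Equiv.Perm α} {r : α → α → Prop}
    [∀ a b, Decidable (r a b)] (hr : ∀ i j, r (σ i) (σ j) ↔ r i j) {t : Finset α}
    (ht : ∀ j, σ j ∈ t ↔ j ∈ t) (i : α) : #(t.filter (r (σ i))) = #(t.filter (r i)) :=
  (card_equiv σ fun j => by simp only [mem_filter, ht, hr]).symm

theorem card_filter_product_eq_mul {α β : Type*} {s : Finset α} {t : Finset β}
    {p : α → β → Prop} [∀ a b, Decidable (p a b)] {m : ℕ}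
    (h : ∀ a ∈ s, #(t.filter (p a)) = m) :
    #((s ×ˢ t).filter fun x => p x.1 x.2) = #s * m := by
  rw [← sum_const_nat h]
  simp only [card_filter, sum_product]

theorem orbit_card_dvd_pairs_general {I : Type*}
    (A : I → I → ℤ)
    (σ : Equiv.Perm I) (hσ : ∀ i j, A (σ i) (σ j) = A i j)
    (η η' : Finset I) (i₀ i₀' : I)
    (hη : ∀ j, j ∈ η ↔ ∃ k : ℤ, (σ ^ k) i₀ = j)
    (hη' : ∀ j, j ∈ η' ↔ ∃ k : ℤ, (σ ^ k) i₀' = j) :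
    (∀ i ∈ η, ∀ i' ∈ η,
      (η'.filter (fun j => A i j ≠ 0)).card = (η'.filter (fun j => A i' j ≠ 0)).card) ∧
    η.card ∣ ((η ×ˢ η').filter (fun p => A p.1 p.2 ≠ 0)).card := by
  have hη'_stable : ∀ j, σ j ∈ η' ↔ j ∈ η' := fun j => by
    simp only [hη']
    exact σ.sameCycle_apply_right
  have hcount_σ : ∀ i, #(η'.filter (fun j => A (σ i) j ≠ 0)) = #(η'.filter (fun j => A i j ≠ 0)) :=
    card_filter_perm_apply (r := fun i j => A i j ≠ 0) (fun i j => by rw [hσ]) hη'_stable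
  have hconst : ∀ i ∈ η, ∀ i' ∈ η,
      #(η'.filter (fun j => A i j ≠ 0)) = #(η'.filter (fun j => A i' j ≠ 0)) := by
    intro i hi i' hi'
    have hi : σ.SameCycle i₀ i := (hη i).1 hi
    have hi' : σ.SameCycle i₀ i' := (hη i').1 hi'
    exact (hi.symm.trans hi').apply_eq_of_invariant
      (g := fun i => #(η'.filter (fun j => A i j ≠ 0))) hcount_σ
  refine ⟨hconst, ?_⟩
  rw [card_filter_product_eq_mul (p := fun i j => A i j ≠ 0)
    (fun i hi => hconst i hi i₀ ((hη i₀).2 ⟨0, rfl⟩))]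
  exact dvd_mul_right _ _

/-- let `A` be a symmetric integer matrix on a finite type `I`,
invariant under a bijection `σ`.  If `η` and `η'` are two orbits of (the cyclic
group generated by) `σ`, then the number `#{j ∈ η' : A i j ≠ 0}` is independent
of `i ∈ η`; consequently `#η` divides `#{(i,j) ∈ η × η' : A i j ≠ 0}`
(Lusztig 1.5, integrality of the folded pairing). -/
theorem orbit_card_dvd_pairs {I : Type*} [Fintype I] [DecidableEq I]
    (A : I → I → ℤ)
    (hsymm : ∀ i j, A i j = A j i)
    (σ : Equiv.Perm I) (hσ : ∀ i j, A (σ i) (σ j) = A i j)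
    (η η' : Finset I) (i₀ i₀' : I)
    (hη : ∀ j, j ∈ η ↔ ∃ k : ℤ, (σ ^ k) i₀ = j)
    (hη' : ∀ j, j ∈ η' ↔ ∃ k : ℤ, (σ ^ k) i₀' = j) :
    (∀ i ∈ η, ∀ i' ∈ η,
      (η'.filter (fun j => A i j ≠ 0)).card = (η'.filter (fun j => A i' j ≠ 0)).card) ∧
    η.card ∣ ((η ×ˢ η').filter (fun p => A p.1 p.2 ≠ 0)).card :=
  orbit_card_dvd_pairs_general A σ hσ η η' i₀ i₀' hη hη'
end
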